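/- arXiv:1602.01943 — 3 statements merged into one kernel-verified Lean document; each statement's English description precedes it below -/
import Mathlib

section
/- Let Λ = ℤ[t,t⁻¹] be the ring of Laurent polynomials over ℤ. If G is a Λ-module whose underlying abelian group is finitely generated, then Hom_Λ(G, Λ) = 0. -/
namespace LaurentPolynomial

variable {R : Type*} [Ring R]

theorem coeff_T_mul (n m : ℤ) (f : R[T;T⁻¹]) : (T n * f).coeff m = f.coeff (m - n) := by
  rw [T, AddMonoidAlgebra.coeff_single_mul_apply, one_mul, neg_add_eq_sub]

theorem exists_support_subset_of_fg {H : AddSubgroup R[T;T⁻¹]} (hH : H.FG) :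
    ∃ S : Finset ℤ, ∀ f ∈ H, f.coeff.support ⊆ S := by
  obtain ⟨s, rfl⟩ := hH
  refine ⟨s.sup fun f => f.coeff.support, fun f hf => ?_⟩
  induction hf using AddSubgroup.closure_induction with
  | mem g hg => exact Finset.le_sup (f := fun f : R[T;T⁻¹] => f.coeff.support) hg
  | zero => simp
  | add g h _ _ hg hh => exact Finsupp.support_add.trans (Finset.union_subset hg hh)
  | neg g _ hg => simpa using hg

/-- Multiplying by `T n` shifts supports by `n`, so a nonzero ideal has unbounded supports. -/
theorem _root_.Ideal.eq_bot_of_fg_toAddSubgroup {I : Ideal R[T;T⁻¹]}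
    (hI : I.toAddSubgroup.FG) : I = ⊥ := by
  obtain ⟨S, hS⟩ := exists_support_subset_of_fg hI
  refine (Submodule.eq_bot_iff I).mpr fun f hf => ?_
  by_contra hf0
  obtain ⟨d, hd⟩ : f.coeff.support.Nonempty :=
    Finsupp.support_nonempty_iff.mpr (mt AddMonoidAlgebra.coeff_eq_zero.mp hf0)
  have shift_mem (n : ℤ) : n + d ∈ S := by
    refine hS _ (I.mul_mem_left (T n) hf) ?_
    rwa [Finsupp.mem_support_iff, coeff_T_mul, add_sub_cancel_left, ← Finsupp.mem_support_iff]
  exact (Set.infinite_of_injective_forall_mem (add_left_injective d) shift_mem) S.finite_toSet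

end LaurentPolynomial

/-- Let `Λ = ℤ[t,t⁻¹]` be the ring of Laurent polynomials over `ℤ`. If `G` is a
`Λ`-module whose underlying abelian group is finitely generated, then
`Hom_Λ(G, Λ) = 0`, i.e. every `Λ`-linear map `G → Λ` is zero. -/
theorem hom_eq_zero_of_fg_as_addGroup
    (G : Type*) [AddCommGroup G] [Module (LaurentPolynomial ℤ) G]
    (hfg : AddGroup.FG G) :
    ∀ f : G →ₗ[LaurentPolynomial ℤ] LaurentPolynomial ℤ, f = 0 := by
  intro f
  have range_fg : (LinearMap.range f).toAddSubgroup.FG := by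
    rw [LinearMap.range_toAddSubgroup, ← AddGroup.fg_iff_addSubgroup_fg]
    infer_instance
  exact LinearMap.range_eq_bot.mp (Ideal.eq_bot_of_fg_toAddSubgroup range_fg)
end

section
/- Let Λ = ℤ[t,t⁻¹] and let d : C₂ → C₁ be a Λ-linear map between finitely generated free Λ-modules such that coker(d) is finitely generated as an abelian group. Then ker(d* : Hom_Λ(C₁,Λ) → Hom_Λ(C₂,Λ)) = 0. -/
/-!
Since `f ∘ d = 0`, `f` factors through `coker d`, a `Λ`-module that is finitely generated over `ℤ`.
If a `Λ`-linear map `g` from such a module to `Λ` had `g m ≠ 0`, then `a ↦ a • m` would embed `Λ`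
`ℤ`-linearly into a Noetherian `ℤ`-module (injective because `g (a • m) = a * g m` and `Λ` is a
domain); but `Λ ≅ ℤ^(ℤ)` is not finitely generated over `ℤ`.
-/

theorem LaurentPolynomial.not_finite (R : Type*) [CommRing R] [Nontrivial R] :
    ¬ Module.Finite R (LaurentPolynomial R) := fun _ ↦
  (Module.finite_finsupp_self_iff.mp <| Module.Finite.equiv <|
    AddMonoidAlgebra.coeffLinearEquiv (R := R) (S := R) (M := ℤ)).elim
      (not_subsingleton R) fun _ ↦ _root_.not_finite ℤ

theorem Module.Dual.eq_zero_of_finite_of_not_finite {R Λ M : Type*} [CommRing R]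
    [IsNoetherianRing R] [CommRing Λ] [NoZeroDivisors Λ] [Algebra R Λ] [AddCommGroup M]
    [Module Λ M] [Module R M] [IsScalarTower R Λ M] [Module.Finite R M]
    (hΛ : ¬ Module.Finite R Λ) (g : Module.Dual Λ M) : g = 0 := by
  by_contra! hg
  obtain ⟨m, hm⟩ : ∃ m, g m ≠ 0 := by
    by_contra! h; exact hg (LinearMap.ext h)
  have hinj : Function.Injective ((LinearMap.toSpanSingleton Λ M m).restrictScalars R) := by
    intro a b hab
    have hab' : a * g m = b * g m := by simpa using congrArg g hab
    exact mul_right_cancel₀ hm hab'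
  have := isNoetherian_of_injective _ hinj
  exact hΛ inferInstance

theorem ker_dual_eq_zero_of_coker_fg_general
    (C₁ C₂ : Type*)
    [AddCommGroup C₁] [Module (LaurentPolynomial ℤ) C₁]
    [AddCommGroup C₂] [Module (LaurentPolynomial ℤ) C₂]
    (d : C₂ →ₗ[LaurentPolynomial ℤ] C₁)
    (hfg : AddGroup.FG (C₁ ⧸ LinearMap.range d)) :
    ∀ f : C₁ →ₗ[LaurentPolynomial ℤ] LaurentPolynomial ℤ, f.comp d = 0 → f = 0 := by
  intro f hf
  have : Module.Finite ℤ (C₁ ⧸ LinearMap.range d) := Module.Finite.iff_addGroup_fg.mpr hfg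
  have hrange : LinearMap.range d ≤ LinearMap.ker f := LinearMap.range_le_ker_iff.mpr hf
  have hlift : (LinearMap.range d).liftQ f hrange = 0 :=
    Module.Dual.eq_zero_of_finite_of_not_finite (LaurentPolynomial.not_finite ℤ) _
  rw [← (LinearMap.range d).liftQ_mkQ f hrange, hlift, LinearMap.zero_comp]

/-- Let `Λ = ℤ[t,t⁻¹]` and let `d : C₂ → C₁` be a `Λ`-linear map between finitely
generated free `Λ`-modules such that `coker d` is finitely generated as an abelian
group.  Then the kernel of `d* : Hom_Λ(C₁,Λ) → Hom_Λ(C₂,Λ)` is zero, i.e. every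
`Λ`-linear `f : C₁ → Λ` with `f ∘ d = 0` is zero. -/
theorem ker_dual_eq_zero_of_coker_fg
    (C₁ C₂ : Type*)
    [AddCommGroup C₁] [Module (LaurentPolynomial ℤ) C₁]
    [Module.Free (LaurentPolynomial ℤ) C₁] [Module.Finite (LaurentPolynomial ℤ) C₁]
    [AddCommGroup C₂] [Module (LaurentPolynomial ℤ) C₂]
    [Module.Free (LaurentPolynomial ℤ) C₂] [Module.Finite (LaurentPolynomial ℤ) C₂]
    (d : C₂ →ₗ[LaurentPolynomial ℤ] C₁)
    (hfg : AddGroup.FG (C₁ ⧸ LinearMap.range d)) :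
    ∀ f : C₁ →ₗ[LaurentPolynomial ℤ] LaurentPolynomial ℤ, f.comp d = 0 → f = 0 :=
  ker_dual_eq_zero_of_coker_fg_general C₁ C₂ d hfg
end

section
/- For the matrix A = [[2,0],[3,1]] over ℤ, the Λ = ℤ[t,t⁻¹]-module G = coker(A − t·Aᵀ : Λ² → Λ²) satisfies: multiplication by 2 on G is surjective. -/
open Matrix LaurentPolynomial

noncomputable section

/-- The matrix `A − t·Aᵀ` over `Λ = ℤ[t,t⁻¹]`, for `A = [[2,0],[3,1]]`. -/
def ASubTAt : Matrix (Fin 2) (Fin 2) (LaurentPolynomial ℤ) :=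
  (!![2, 0; 3, 1] : Matrix (Fin 2) (Fin 2) ℤ).map (Int.cast : ℤ → LaurentPolynomial ℤ) -
    (T 1 : LaurentPolynomial ℤ) •
      ((!![2, 0; 3, 1] : Matrix (Fin 2) (Fin 2) ℤ)ᵀ.map (Int.cast : ℤ → LaurentPolynomial ℤ))

lemma det_ASubTAt : ASubTAt.det = 2 * (1 + T 1)^2 + T 1 := by
  simp [ASubTAt, Matrix.det_fin_two, Matrix.sub_apply, Matrix.smul_apply, Matrix.map_apply,
    Matrix.transpose_apply, Matrix.vecHead, Matrix.vecTail]
  ring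

/-- For `A = [[2,0],[3,1]]`, multiplication by `2` is surjective on the
`Λ = ℤ[t,t⁻¹]`-module `G = coker (A − t·Aᵀ : Λ² → Λ²)`. -/
theorem two_smul_surjective_on_coker :
    Function.Surjective
      (fun x : (Fin 2 → LaurentPolynomial ℤ) ⧸ LinearMap.range ASubTAt.mulVecLin =>
        (2 : ℤ) • x) := by
  intro x
  obtain ⟨v, rfl⟩ := Submodule.Quotient.mk_surjective _ x
  refine ⟨Submodule.Quotient.mk ((-(T (-1)) * (1 + T 1)^2 : LaurentPolynomial ℤ) • v), ?_⟩
  simp only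
  rw [← Submodule.Quotient.mk_smul, Submodule.Quotient.eq]
  refine ⟨(-(T (-1)) : LaurentPolynomial ℤ) • (ASubTAt.adjugate.mulVec v), ?_⟩
  have hA : ASubTAt.mulVec (ASubTAt.adjugate.mulVec v) = ASubTAt.det • v := by
    rw [Matrix.mulVec_mulVec, Matrix.mul_adjugate, Matrix.smul_mulVec,
      Matrix.one_mulVec]
  have key : (-(T (-1)) : LaurentPolynomial ℤ) * ASubTAt.det
      = (2 : ℤ) • (-(T (-1)) * (1 + T 1)^2 : LaurentPolynomial ℤ) - 1 := by
    rw [det_ASubTAt]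
    have h : (T (-1) : LaurentPolynomial ℤ) * T 1 = 1 := by
      rw [← T_add]; norm_num
    push_cast [zsmul_eq_mul]
    linear_combination (-1 : LaurentPolynomial ℤ) * h
  rw [_root_.map_smul, Matrix.mulVecLin_apply, hA, smul_smul, key, sub_smul, one_smul,
    smul_assoc]

end
end
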